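/- The Heawood graph has exactly 28 cycles of length 6. -/

import Mathlib

/-- A directed `g`-cycle of a simple graph `G`: an injective map `c : ZMod g → V`
with `c i` adjacent to `c (i+1)` for all `i`. -/
def IsDirCycleOn {V : Type*} (G : SimpleGraph V) (g : ℕ) (c : ZMod g → V) : Prop :=
  Function.Injective c ∧ ∀ i : ZMod g, G.Adj (c i) (c (i + 1))

/-- A sequence of `k` distinct vertices with consecutive vertices adjacent. -/
def IsPathSeq {V : Type*} (G : SimpleGraph V) (k : ℕ) (v : Fin k → V) : Prop :=
  Function.Injective v ∧ ∀ (j : ℕ) (h : j + 1 < k),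
    G.Adj (v ⟨j, Nat.lt_of_succ_lt h⟩) (v ⟨j + 1, h⟩)

/-- A coherent `g`-cycle orientation of level `k` of `G`: a set `D` of directed
`g`-cycles of `G` containing, for every `g`-cycle of `G`, exactly one of its two
directions (one representative up to rotation), and such that every sequence of `k`
distinct vertices `v 0, …, v (k-1)` with consecutive vertices adjacent occurs as a
consecutive segment `(c i, c (i+1), …, c (i+k-1))` of exactly one `c ∈ D`. -/
def IsCoherentOrientation {V : Type*} (G : SimpleGraph V) (g k : ℕ)
    (D : Set (ZMod g → V)) : Prop :=
  (∀ c ∈ D, IsDirCycleOn G g c) ∧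
  (∀ c : ZMod g → V, IsDirCycleOn G g c →
    ∃! c', c' ∈ D ∧
      ((∃ r : ZMod g, ∀ i, c' i = c (i + r)) ∨ (∃ r : ZMod g, ∀ i, c' i = c (r - i)))) ∧
  (∀ v : Fin k → V, IsPathSeq G k v →
    ∃! c, c ∈ D ∧ ∃ i : ZMod g, ∀ j : Fin k, c (i + ((j : ℕ) : ZMod g)) = v j)

/-- Two directed `g`-cycles are related iff one is a rotation of the other or a
rotation of the reversal of the other; the quotient by this relation is the set of
(undirected) `g`-cycles of `G`. -/
def DirCycleRel {V : Type*} (G : SimpleGraph V) (g : ℕ)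
    (c c' : {c : ZMod g → V // IsDirCycleOn G g c}) : Prop :=
  (∃ r : ZMod g, ∀ i, c'.1 i = c.1 (i + r)) ∨ (∃ r : ZMod g, ∀ i, c'.1 i = c.1 (r - i))

/-- The Heawood graph: vertex set `ZMod 14`, `i` adjacent to `i+1`, together with the
extra edges `{2x, 2x+5}` for every `x`. -/
def heawoodGraph : SimpleGraph (ZMod 14) :=
  SimpleGraph.fromRel (fun i j =>
    j = i + 1 ∨ ∃ x : ZMod 14, i = 2 * x ∧ j = 2 * x + 5)

/-! The translation `x ↦ x + 2` is an automorphism of the Heawood graph, so every hexagon can be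
moved to one through `0` or `1`; a finite search shows that those are, up to rotation and
reflection, translates of four hexagons. The resulting 28 hexagons are pairwise inequivalent. -/

def IsDihedralImage {V : Type*} {g : ℕ} (c c' : ZMod g → V) : Prop :=
  (∃ r : ZMod g, ∀ i, c' i = c (i + r)) ∨ (∃ r : ZMod g, ∀ i, c' i = c (r - i))

instance {V : Type*} [DecidableEq V] {g : ℕ} [NeZero g] (c c' : ZMod g → V) :
    Decidable (IsDihedralImage c c') :=
  inferInstanceAs (Decidable (_ ∨ _))

theorem IsDihedralImage.comp {V W : Type*} {g : ℕ} {c c' : ZMod g → V}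
    (h : IsDihedralImage c c') (f : V → W) : IsDihedralImage (f ∘ c) (f ∘ c') := by
  rcases h with ⟨r, h⟩ | ⟨r, h⟩
  · exact Or.inl ⟨r, fun i => congrArg f (h i)⟩
  · exact Or.inr ⟨r, fun i => congrArg f (h i)⟩

theorem isDihedralImage_equivalence (V : Type*) (g : ℕ) :
    Equivalence (@IsDihedralImage V g) where
  refl _ := Or.inl ⟨0, fun i => by rw [add_zero]⟩
  symm := by
    rintro c c' (⟨r, h⟩ | ⟨r, h⟩)
    · exact Or.inl ⟨-r, fun i => by rw [h, neg_add_cancel_right]⟩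
    · exact Or.inr ⟨r, fun i => by rw [h, sub_sub_cancel]⟩
  trans := by
    rintro c c' c'' (⟨r, h⟩ | ⟨r, h⟩) (⟨s, h'⟩ | ⟨s, h'⟩)
    · exact Or.inl ⟨s + r, fun i => by rw [h', h, add_assoc]⟩
    · exact Or.inr ⟨s + r, fun i => by rw [h', h, sub_add_eq_add_sub]⟩
    · exact Or.inr ⟨r - s, fun i => by rw [h', h, sub_sub, add_comm]⟩
    · exact Or.inl ⟨r - s, fun i => by rw [h', h, sub_sub_eq_add_sub, add_sub_right_comm, add_comm]⟩

theorem dirCycleRel_equivalence {V : Type*} (G : SimpleGraph V) (g : ℕ) :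
    Equivalence (DirCycleRel G g) :=
  (isDihedralImage_equivalence V g).comap Subtype.val

theorem card_quot_eq_of_transversal {α ι : Type*} {r : α → α → Prop} (hr : Equivalence r)
    (f : ι → α) (hf : ∀ a, ∃ i, r a (f i)) (hf_inj : ∀ i j, r (f i) (f j) → i = j) :
    Nat.card (Quot r) = Nat.card ι :=
  (Nat.card_eq_of_bijective (fun i => Quot.mk r (f i))
    ⟨fun i j h => hf_inj i j ((hr.quot_mk_eq_iff _ _).1 h),
      Quot.ind fun a => (hf a).imp fun _ h => ((hr.quot_mk_eq_iff _ _).2 h).symm⟩).symm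

theorem heawoodGraph_adj_iff (a b : ZMod 14) :
    heawoodGraph.Adj a b ↔
      b = a + 1 ∨ a = b + 1 ∨ (a.val % 2 = 0 ∧ b = a + 5) ∨ (b.val % 2 = 0 ∧ a = b + 5) := by
  revert a b
  simp only [heawoodGraph, SimpleGraph.fromRel_adj]
  decide

instance : DecidableRel heawoodGraph.Adj := fun a b =>
  decidable_of_iff _ (heawoodGraph_adj_iff a b).symm

theorem heawoodGraph_adj_add_two_mul {a b : ZMod 14} (h : heawoodGraph.Adj a b) (t : ZMod 14) :
    heawoodGraph.Adj (a + 2 * t) (b + 2 * t) := by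
  have shift : ∀ i j : ZMod 14, (j = i + 1 ∨ ∃ x : ZMod 14, i = 2 * x ∧ j = 2 * x + 5) →
      (j + 2 * t = i + 2 * t + 1 ∨ ∃ x : ZMod 14, i + 2 * t = 2 * x ∧ j + 2 * t = 2 * x + 5) := by
    rintro i j (rfl | ⟨x, rfl, rfl⟩)
    · exact Or.inl (by ring)
    · exact Or.inr ⟨x + t, by ring, by ring⟩
  rw [heawoodGraph, SimpleGraph.fromRel_adj] at h ⊢
  exact ⟨by simpa using h.1, h.2.imp (shift a b) (shift b a)⟩

def heawoodHexagon (k : Fin 4 × Fin 7) (i : ZMod 6) : ZMod 14 :=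
  ![![0, 1, 2, 3, 4, 5], ![0, 1, 2, 7, 6, 5], ![0, 1, 2, 7, 8, 13], ![0, 1, 10, 9, 4, 5]] k.1 i +
    2 * (k.2 : ℕ)

theorem isDirCycleOn_heawoodHexagon (k : Fin 4 × Fin 7) :
    IsDirCycleOn heawoodGraph 6 (heawoodHexagon k) := by
  revert k
  unfold IsDirCycleOn
  decide

theorem eq_of_isDihedralImage_heawoodHexagon {k k' : Fin 4 × Fin 7}
    (h : IsDihedralImage (heawoodHexagon k) (heawoodHexagon k')) : k = k' := by
  revert k k'
  decide +kernel

theorem exists_heawoodHexagon_eq_add (k : Fin 4 × Fin 7) (s : ZMod 14) :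
    ∃ k', heawoodHexagon k' = (· + 2 * s) ∘ heawoodHexagon k := by
  obtain ⟨m, hm⟩ : ∃ m : Fin 7, 2 * ((m : ℕ) : ZMod 14) = 2 * (k.2 : ℕ) + 2 * s := by
    revert k s
    decide
  exact ⟨(k.1, m), funext fun i => by simp only [heawoodHexagon, Function.comp, hm, add_assoc]⟩

theorem IsDirCycleOn.heawoodGraph_add_two_mul {g : ℕ} {c : ZMod g → ZMod 14}
    (hc : IsDirCycleOn heawoodGraph g c) (t : ZMod 14) :
    IsDirCycleOn heawoodGraph g ((· + 2 * t) ∘ c) :=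
  ⟨(add_left_injective _).comp hc.1, fun i => heawoodGraph_adj_add_two_mul (hc.2 i) t⟩

set_option synthInstance.maxSize 100000 in
theorem exists_isDihedralImage_heawoodHexagon_of_closedWalk :
    ∀ a₀ : ZMod 14, a₀.val < 2 → ∀ a₁, heawoodGraph.Adj a₀ a₁ →
    ∀ a₂, heawoodGraph.Adj a₁ a₂ → a₀ ≠ a₂ →
    ∀ a₃, heawoodGraph.Adj a₂ a₃ → a₁ ≠ a₃ → ∀ a₄, heawoodGraph.Adj a₃ a₄ → a₂ ≠ a₄ →
    ∀ a₅, heawoodGraph.Adj a₄ a₅ → a₃ ≠ a₅ → heawoodGraph.Adj a₅ a₀ → a₄ ≠ a₀ → a₅ ≠ a₁ →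
    ∃ k, IsDihedralImage (fun i : ZMod 6 => ![a₀, a₁, a₂, a₃, a₄, a₅] i) (heawoodHexagon k) := by
  decide +kernel

theorem exists_isDihedralImage_heawoodHexagon_of_val_lt_two {c : ZMod 6 → ZMod 14}
    (hc : IsDirCycleOn heawoodGraph 6 c) (h₀ : (c 0).val < 2) :
    ∃ k, IsDihedralImage c (heawoodHexagon k) := by
  have hne {i j : ZMod 6} (hij : i ≠ j) : c i ≠ c j := hc.1.ne hij
  have hc_eta : (fun i : ZMod 6 => ![c 0, c 1, c 2, c 3, c 4, c 5] i) = c := by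
    funext i
    fin_cases i <;> rfl
  rw [← hc_eta]
  exact exists_isDihedralImage_heawoodHexagon_of_closedWalk (c 0) h₀
    (c 1) (hc.2 0) (c 2) (hc.2 1) (hne (by decide)) (c 3) (hc.2 2) (hne (by decide))
    (c 4) (hc.2 3) (hne (by decide)) (c 5) (hc.2 4) (hne (by decide))
    (hc.2 5) (hne (by decide)) (hne (by decide))

theorem exists_isDihedralImage_heawoodHexagon {c : ZMod 6 → ZMod 14}
    (hc : IsDirCycleOn heawoodGraph 6 c) : ∃ k, IsDihedralImage c (heawoodHexagon k) := by
  obtain ⟨s, hs⟩ : ∃ s : ZMod 14, (c 0 + 2 * -s).val < 2 := by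
    generalize c 0 = v
    revert v
    decide
  obtain ⟨k, hk⟩ :=
    exists_isDihedralImage_heawoodHexagon_of_val_lt_two (hc.heawoodGraph_add_two_mul (-s)) hs
  obtain ⟨k', hk'⟩ := exists_heawoodHexagon_eq_add k s
  refine ⟨k', ?_⟩
  simpa [hk', Function.comp_def] using hk.comp (· + 2 * s)

/-- The Heawood graph has exactly 28 cycles of length 6. -/
theorem heawood_28_hexagons :
    Nat.card (Quot (DirCycleRel heawoodGraph 6)) = 28 := by
  rw [card_quot_eq_of_transversal (dirCycleRel_equivalence heawoodGraph 6)
    (fun k => ⟨heawoodHexagon k, isDirCycleOn_heawoodHexagon k⟩)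
    (fun c => exists_isDihedralImage_heawoodHexagon c.2)
    (fun _ _ h => eq_of_isDihedralImage_heawoodHexagon h)]
  simp
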